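/- Let R be a TRS over sign(R), let Σ = {f, ♯} ∪ sign(R) with f a fresh binary symbol and ♯ a fresh constant, and let Γ be a ranked alphabet with sign(R) ⊆ Γ. Number the symbols of Γ − sign(R) from 1 to |Γ − sign(R)|, and to each g ∈ Γ − sign(R) of arity k with number l assign t_g = f(left_k, right_l), where right₀ = ♯, right_{n+1} = f(♯, right_n), left₀ = ♯, left_{n+1} = f(left_n, x_{n+1}). Let S = {g(x₁,…,x_k) → t_g : k ≥ 0, g ∈ Γ_k − sign(R)}. Then S is a convergent TRS, and for all r, s ∈ T_Γ: r →_R s if and only if r↓_S →_R s↓_S. -/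

import Mathlib

set_option autoImplicit false

/-!
Basic framework: ranked alphabets, terms, term rewrite systems,
bottom-up tree automata, recognizability.
A ranked alphabet is modelled by a (finite) type `σ` together with an
arity function `ar : σ → ℕ`.  `Tm.var n` denotes the variable `x_{n+1}`,
so `T_Σ(X_m)` corresponds to terms all of whose variables satisfy `n < m`,
and ground terms (`T_Σ`) are terms satisfying `Tm.Ground`.
-/

/-- Terms over the ranked alphabet `(σ, ar)` with variables `x₁, x₂, …`
(`var n` is `x_{n+1}`). -/
inductive Tm (σ : Type) (ar : σ → ℕ) : Type
  | var : ℕ → Tm σ ar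
  | app : (f : σ) → (Fin (ar f) → Tm σ ar) → Tm σ ar

namespace Tm

variable {σ γ : Type} {ar : σ → ℕ} {arγ : γ → ℕ}

/-- Application of a substitution `θ` (assigning a term to each variable). -/
def subst (θ : ℕ → Tm σ ar) : Tm σ ar → Tm σ ar
  | var n => θ n
  | app f ts => app f fun i => (ts i).subst θ

/-- A term is ground if it contains no variables. -/
def Ground : Tm σ ar → Prop
  | var _ => False
  | app _ ts => ∀ i, (ts i).Ground

/-- The set of (indices of) variables occurring in a term. -/
def vars : Tm σ ar → Set ℕ
  | var n => {n}
  | app _ ts => ⋃ i, (ts i).vars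

/-- Number of occurrences of the variable `x_{n+1}` in a term. -/
def count (n : ℕ) : Tm σ ar → ℕ
  | var m => if m = n then 1 else 0
  | app _ ts => ∑ i, (ts i).count n

/-- A term is linear if every variable occurs at most once in it. -/
def Linear (t : Tm σ ar) : Prop := ∀ n, t.count n ≤ 1

/-- The symbol `s` occurs in the term. -/
def symOccurs (s : σ) : Tm σ ar → Prop
  | var _ => False
  | app f ts => f = s ∨ ∃ i, (ts i).symOccurs s

/-- Height of a term (constants and variables have height 0). -/
def height : Tm σ ar → ℕ
  | var _ => 0
  | app _ ts => Finset.univ.sup fun i => (ts i).height + 1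

/-- Renaming of the alphabet along an arity-preserving map. -/
def map (ι : σ → γ) (h : ∀ s, arγ (ι s) = ar s) : Tm σ ar → Tm γ arγ
  | var n => var n
  | app f ts => app (ι f) fun i => (ts (Fin.cast (h f) i)).map ι h

/-- The subterm of `t` at a position (a list of argument indices), if defined. -/
def subAt : Tm σ ar → List ℕ → Option (Tm σ ar)
  | t, [] => some t
  | var _, _ :: _ => none
  | app f ts, i :: p => if h : i < ar f then (ts ⟨i, h⟩).subAt p else none

/-- Subterm relation. -/
inductive Subtm : Tm σ ar → Tm σ ar → Prop
  | refl (t : Tm σ ar) : Subtm t t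
  | app {s : Tm σ ar} {f : σ} {ts : Fin (ar f) → Tm σ ar} (i : Fin (ar f)) :
      Subtm s (ts i) → Subtm s (Tm.app f ts)

end Tm

section Rewriting

variable {σ γ : Type} {ar : σ → ℕ} {arγ : γ → ℕ}

/-- One-step rewriting by the rule set `R`: apply a rule under a substitution
at the root, or rewrite inside one argument. -/
inductive Step (R : Set (Tm σ ar × Tm σ ar)) : Tm σ ar → Tm σ ar → Prop
  | rule {l r : Tm σ ar} (θ : ℕ → Tm σ ar) (h : (l, r) ∈ R) :
      Step R (l.subst θ) (r.subst θ)
  | congr {f : σ} {ts : Fin (ar f) → Tm σ ar} {t' : Tm σ ar} (i : Fin (ar f)) :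
      Step R (ts i) t' → Step R (Tm.app f ts) (Tm.app f (Function.update ts i t'))

/-- Many-step rewriting: reflexive-transitive closure of `Step`. -/
def Steps (R : Set (Tm σ ar × Tm σ ar)) : Tm σ ar → Tm σ ar → Prop :=
  Relation.ReflTransGen (Step R)

/-- `R` is a term rewrite system: finitely many rules, and every variable of a
right-hand side occurs in the corresponding left-hand side. -/
def IsTRS (R : Set (Tm σ ar × Tm σ ar)) : Prop :=
  R.Finite ∧ ∀ lr ∈ R, lr.2.vars ⊆ lr.1.vars

/-- The set `R*(L)` of descendants of members of `L`. -/
def Desc (R : Set (Tm σ ar × Tm σ ar)) (L : Set (Tm σ ar)) : Set (Tm σ ar) :=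
  {p | ∃ q ∈ L, Steps R q p}

/-- `R` is terminating: there is no infinite reduction sequence. -/
def Terminating (R : Set (Tm σ ar × Tm σ ar)) : Prop :=
  ¬ ∃ f : ℕ → Tm σ ar, ∀ n, Step R (f n) (f (n + 1))

/-- `R` is confluent. -/
def Confluent (R : Set (Tm σ ar × Tm σ ar)) : Prop :=
  ∀ a b c, Steps R a b → Steps R a c → ∃ d, Steps R b d ∧ Steps R c d

/-- `u` is an `R`-normal form of `t`. -/
def NormalFormOf (R : Set (Tm σ ar × Tm σ ar)) (t u : Tm σ ar) : Prop :=
  Steps R t u ∧ ¬ ∃ v, Step R u v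

/-- The term is a variable. -/
def IsVarTm (t : Tm σ ar) : Prop := ∃ n, t = Tm.var n

/-- Every left-hand side is linear. -/
def LeftLinearTRS (R : Set (Tm σ ar × Tm σ ar)) : Prop :=
  ∀ lr ∈ R, lr.1.Linear

/-- All left- and right-hand sides are linear. -/
def LinearTRS (R : Set (Tm σ ar × Tm σ ar)) : Prop :=
  ∀ lr ∈ R, lr.1.Linear ∧ lr.2.Linear

/-- No rule has a variable as left-hand side or as right-hand side. -/
def CollapseFree (R : Set (Tm σ ar × Tm σ ar)) : Prop :=
  ∀ lr ∈ R, ¬ IsVarTm lr.1 ∧ ¬ IsVarTm lr.2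

/-- Transport of a rule set along an arity-preserving renaming of the alphabet. -/
def mapRules (ι : σ → γ) (h : ∀ s, arγ (ι s) = ar s) (R : Set (Tm σ ar × Tm σ ar)) :
    Set (Tm γ arγ × Tm γ arγ) :=
  (fun lr => (lr.1.map ι h, lr.2.map ι h)) '' R

end Rewriting

/-- A bottom-up tree automaton over `(σ, ar)` with state type `Q`:
transition rules `δ(q₁,…,qₙ) → q`, λ-rules `q → q'`, and final states. -/
structure BTA (σ : Type) (ar : σ → ℕ) (Q : Type) where
  trans : ∀ f : σ, (Fin (ar f) → Q) → Q → Prop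
  eps : Q → Q → Prop
  final : Q → Prop

namespace BTA

variable {σ : Type} {ar : σ → ℕ} {Q : Type}

/-- `t →* q`: the (ground) term `t` can be rewritten to the state `q`. -/
inductive Reach (A : BTA σ ar Q) : Tm σ ar → Q → Prop
  | app {f : σ} {ts : Fin (ar f) → Tm σ ar} {qs : Fin (ar f) → Q} {q : Q} :
      (∀ i, Reach A (ts i) (qs i)) → A.trans f qs q → Reach A (Tm.app f ts) q
  | eps {t : Tm σ ar} {q q' : Q} : Reach A t q → A.eps q q' → Reach A t q'

/-- The tree language recognized by the automaton. -/
def Lang (A : BTA σ ar Q) : Set (Tm σ ar) := {t | ∃ q, A.final q ∧ A.Reach t q}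

end BTA

/-- A tree language is recognizable if some bottom-up tree automaton with a
finite state set recognizes it. -/
def Recognizable {σ : Type} {ar : σ → ℕ} (L : Set (Tm σ ar)) : Prop :=
  ∃ (Q : Type) (_ : Finite Q) (A : BTA σ ar Q), A.Lang = L

/-- `R` (a TRS over all of `σ`, thought of as `sign(R)`) preserves
recognizability of finite tree languages: for every ranked alphabet extending
`σ` (i.e. every finite type with an arity-preserving injection from `σ`) and
every finite tree language of ground terms, the descendant set is recognizable. -/
def PRF {σ : Type} {ar : σ → ℕ} (R : Set (Tm σ ar × Tm σ ar)) : Prop :=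
  ∀ (γ : Type) (arγ : γ → ℕ), Finite γ →
    ∀ ι : σ → γ, Function.Injective ι →
      ∀ h : ∀ s, arγ (ι s) = ar s,
        ∀ L : Set (Tm γ arγ), L.Finite → (∀ t ∈ L, t.Ground) →
          Recognizable (Desc (mapRules ι h R) L)

/-- `R` preserves recognizability: as `PRF`, but for arbitrary recognizable
tree languages. -/
def PR {σ : Type} {ar : σ → ℕ} (R : Set (Tm σ ar × Tm σ ar)) : Prop :=
  ∀ (γ : Type) (arγ : γ → ℕ), Finite γ →
    ∀ ι : σ → γ, Function.Injective ι →
      ∀ h : ∀ s, arγ (ι s) = ar s,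
        ∀ L : Set (Tm γ arγ), Recognizable L →
          Recognizable (Desc (mapRules ι h R) L)

/-! ### Extending an alphabet by a fresh binary symbol `f` and a fresh
constant `♯`: the alphabet `γ ⊕ Bool`, where `Sum.inr true` is `f` (arity 2)
and `Sum.inr false` is `♯` (arity 0). -/

/-- Arity function of `Σ = {f, ♯} ∪ Γ`. -/
def arExt {γ : Type} (arγ : γ → ℕ) : γ ⊕ Bool → ℕ :=
  Sum.elim arγ fun b => cond b 2 0

/-! ### The comb construction (used in Statements 9 and 10).
`Γ` is a ranked alphabet containing `sign(R)` (via the injection `ι`), and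
`Γ ∪ {f, ♯}` is modelled by `γ ⊕ Bool` with `arExt`. -/

section Comb

variable {γ : Type} {arγ : γ → ℕ}

/-- the fresh constant `♯` -/
def shE : Tm (γ ⊕ Bool) (arExt arγ) := .app (Sum.inr false) ![]

/-- `f(a, b)` for the fresh binary symbol `f` -/
def fE (a b : Tm (γ ⊕ Bool) (arExt arγ)) : Tm (γ ⊕ Bool) (arExt arγ) :=
  .app (Sum.inr true) ![a, b]

/-- the right combs: `right₀ = ♯`, `right_{n+1} = f(♯, right_n)` -/
def rightCombE : ℕ → Tm (γ ⊕ Bool) (arExt arγ)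
  | 0 => shE
  | n + 1 => fE shE (rightCombE n)

/-- the left combs: `left₀ = ♯`, `left_{n+1} = f(left_n, x_{n+1})`
(recall `Tm.var n` is the variable `x_{n+1}`) -/
def leftCombE : ℕ → Tm (γ ⊕ Bool) (arExt arγ)
  | 0 => shE
  | n + 1 => fE (leftCombE n) (.var n)

/-- The TRS `S = { g(x₁,…,x_k) → t_g : g ∈ Γ − sign(R) of arity k }`,
where `t_g = f(left_k, right_{num g})`. -/
def combTRS (ι : γ → Prop) (num : γ → ℕ) :
    Set (Tm (γ ⊕ Bool) (arExt arγ) × Tm (γ ⊕ Bool) (arExt arγ)) :=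
  {p | ∃ g : γ, ¬ ι g ∧
    p = (Tm.app (Sum.inl g) fun i => Tm.var (i : Fin (arγ g)).1,
         fE (leftCombE (arγ g)) (rightCombE (num g)))}

end Comb

/-!
On a term over `Γ ∪ {f, ♯}`, the `S`-normal form is computed bottom-up by replacing each symbol
`g ∉ sign(R)` with its comb `t_g` (`combNF`). An `S`-step leaves this function unchanged and
removes one occurrence of such a symbol, so `S` is terminating and confluent, and the normal form
of `r ∈ T_Γ` is its value `encode r` on `r`.

Since `encode` is the identity on the symbols of `sign(R)`, it commutes with instantiating the
rules of `R`, so `r →_R s` gives `encode r →_R encode s`. Conversely, `encode` is injective (the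
right comb of `t_g` records the number of `g`, the left comb its arguments), so an `R`-redex at a
`sign(R)`-position of `encode r` is the encoding of an `R`-redex of `r`. The combs contain only
`f`, `♯` and variables, so inside a comb a step between encodings either rewrites a single argument
or uses a rule `x → x`, which also gives `r →_R r`.
-/

namespace Tm

variable {σ γ : Type} {ar : σ → ℕ} {arγ : γ → ℕ}

theorem mem_vars_app {f : σ} {ts : Fin (ar f) → Tm σ ar} {n : ℕ} :
    n ∈ (app f ts).vars ↔ ∃ i, n ∈ (ts i).vars :=
  Set.mem_iUnion

theorem subst_eq_subst_iff {t : Tm σ ar} {θ θ' : ℕ → Tm σ ar} :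
    t.subst θ = t.subst θ' ↔ ∀ n ∈ t.vars, θ n = θ' n := by
  induction t with
  | var n => simp [subst, vars]
  | app f ts ih =>
    simp only [subst, app.injEq, heq_eq_eq, true_and, funext_iff, ih, mem_vars_app]
    grind

theorem mem_vars_map (ι : σ → γ) (h : ∀ s, arγ (ι s) = ar s) (t : Tm σ ar) {n : ℕ} :
    n ∈ (t.map ι h).vars ↔ n ∈ t.vars := by
  induction t with
  | var m => exact Iff.rfl
  | app f ts ih =>
    simp only [map, mem_vars_app, ih]
    exact (finCongr (h f)).exists_congr_left

instance : Inhabited (Tm σ ar) := ⟨.var 0⟩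

def finSubst {k : ℕ} (v : Fin k → Tm σ ar) : ℕ → Tm σ ar :=
  fun n => if h : n < k then v ⟨n, h⟩ else .var n

@[simp]
theorem finSubst_val {k : ℕ} (v : Fin k → Tm σ ar) (i : Fin k) : finSubst v i = v i := by
  simp [finSubst]

theorem finSubst_update {k : ℕ} (v : Fin k → Tm σ ar) (i : Fin k) (x : Tm σ ar) :
    finSubst (Function.update v i x) = Function.update (finSubst v) i x := by
  funext n
  by_cases hn : n < k
  · obtain ⟨j, rfl⟩ : ∃ j : Fin k, n = j := ⟨⟨n, hn⟩, rfl⟩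
    by_cases hji : j = i
    · simp [hji]
    · simp [Function.update_of_ne hji, Function.update_of_ne (Fin.val_injective.ne hji)]
  · have hni : n ≠ i := fun h => hn (h ▸ i.2)
    simp [finSubst, hn, Function.update_of_ne hni]

end Tm

section Rewriting

variable {σ γ : Type} {ar : σ → ℕ} {arγ : γ → ℕ} {Q : Set (Tm σ ar × Tm σ ar)}

theorem Step.app_inv {f : σ} {ts : Fin (ar f) → Tm σ ar} {u : Tm σ ar}
    (h : Step Q (.app f ts) u) :
    (∃ l r θ, (l, r) ∈ Q ∧ Tm.app f ts = l.subst θ ∧ u = r.subst θ) ∨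
      ∃ i t', Step Q (ts i) t' ∧ u = .app f (Function.update ts i t') := by
  generalize ht : Tm.app f ts = t at h
  cases h with
  | rule θ hlr => exact .inl ⟨_, _, θ, hlr, rfl, rfl⟩
  | congr i hs =>
    obtain ⟨rfl, hts⟩ := Tm.app.inj ht
    cases hts
    exact .inr ⟨i, _, hs, rfl⟩

theorem Step.app {f : σ} {ts us : Fin (ar f) → Tm σ ar} (i : Fin (ar f))
    (h : Step Q (ts i) (us i)) (hts : ∀ j ≠ i, ts j = us j) : Step Q (.app f ts) (.app f us) := by
  convert Step.congr i h
  funext j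
  by_cases hj : j = i
  · simp [hj]
  · simp [hj, hts j hj]

theorem Step.var_inv {n : ℕ} {u : Tm σ ar} (h : Step Q (.var n) u) :
    ∃ l r θ, (l, r) ∈ Q ∧ Tm.var n = l.subst θ ∧ u = r.subst θ := by
  generalize ht : Tm.var n = t at h
  cases h with
  | rule θ hlr => exact ⟨_, _, θ, hlr, rfl, rfl⟩
  | congr => cases ht

theorem Steps.app_update {f : σ} {ts : Fin (ar f) → Tm σ ar} {i : Fin (ar f)} {u : Tm σ ar}
    (h : Steps Q (ts i) u) : Steps Q (.app f ts) (.app f (Function.update ts i u)) := by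
  have hlift : ∀ a b, Step Q a b →
      Step Q (.app f (Function.update ts i a)) (.app f (Function.update ts i b)) := by
    intro a b hab
    simpa using Step.congr (ts := Function.update ts i a) i (by simpa using hab)
  simpa [Steps, Function.onFun] using
    Relation.ReflTransGen.lift (fun a => Tm.app f (Function.update ts i a)) hlift _ _ h

theorem Steps.app {f : σ} {ts us : Fin (ar f) → Tm σ ar} (h : ∀ i, Steps Q (ts i) (us i)) :
    Steps Q (.app f ts) (.app f us) := by
  classical
  suffices ∀ s : Finset (Fin (ar f)),
      Steps Q (.app f ts) (.app f fun i => if i ∈ s then us i else ts i) by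
    simpa using this .univ
  intro s
  induction s using Finset.induction_on with
  | empty => exact Relation.ReflTransGen.refl
  | insert j s hj ih =>
    have hupdate : (fun i => if i ∈ insert j s then us i else ts i) =
        Function.update (fun i => if i ∈ s then us i else ts i) j (us j) := by
      funext i
      by_cases hij : i = j <;> simp [Function.update, hij]
    rw [hupdate]
    exact ih.trans (Steps.app_update (by simpa [hj] using h j))

theorem mem_mapRules {ι : σ → γ} {h : ∀ s, arγ (ι s) = ar s} {R : Set (Tm σ ar × Tm σ ar)}
    {l r : Tm γ arγ} :
    (l, r) ∈ mapRules ι h R ↔ ∃ lr ∈ R, lr.1.map ι h = l ∧ lr.2.map ι h = r := by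
  simp [mapRules]

theorem step_self_of_var_rule {ι : σ → γ} {h : ∀ s, arγ (ι s) = ar s}
    {R : Set (Tm σ ar × Tm σ ar)} {p : ℕ} (hp : (.var p, .var p) ∈ R) (t : Tm γ arγ) :
    Step (mapRules ι h R) t t :=
  Step.rule (l := .var p) (r := .var p) (fun _ => t) (mem_mapRules.2 ⟨_, hp, rfl, rfl⟩)

end Rewriting

section Combs

variable {γ : Type} {arγ : γ → ℕ}
  {Q : Set (Tm (γ ⊕ Bool) (arExt arγ) × Tm (γ ⊕ Bool) (arExt arγ))}

local notation "T" => Tm (γ ⊕ Bool) (arExt arγ)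

theorem fE_inj {a b c d : T} : fE a b = fE c d ↔ a = c ∧ b = d := by
  refine ⟨fun h => ?_, fun ⟨hac, hbd⟩ => hac ▸ hbd ▸ rfl⟩
  injection h with _ h
  exact ⟨congrFun h 0, congrFun h 1⟩

theorem shE_ne_fE (a b : T) : shE ≠ fE a b := by
  intro h
  injection h with h
  simp at h

theorem subst_fE (θ : ℕ → T) (a b : T) : (fE a b).subst θ = fE (a.subst θ) (b.subst θ) := by
  show Tm.app _ _ = Tm.app _ _
  congr 1
  funext i
  fin_cases i <;> rfl

theorem subst_shE (θ : ℕ → T) : (shE : T).subst θ = shE := by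
  show Tm.app _ _ = Tm.app _ _
  congr 1
  funext i
  exact i.elim0

theorem subst_rightCombE (θ : ℕ → T) (n : ℕ) : (rightCombE n : T).subst θ = rightCombE n := by
  induction n with
  | zero => exact subst_shE θ
  | succ n ih => rw [rightCombE, subst_fE, subst_shE, ih]

theorem subst_leftCombE_succ (θ : ℕ → T) (k : ℕ) :
    (leftCombE (k + 1) : T).subst θ = fE ((leftCombE k).subst θ) (θ k) :=
  subst_fE θ _ _

theorem mem_vars_fE {a b : T} {n : ℕ} : n ∈ (fE a b).vars ↔ n ∈ a.vars ∨ n ∈ b.vars := by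
  show n ∈ ⋃ i : Fin 2, (![a, b] i).vars ↔ _
  simp [Fin.exists_fin_two]

theorem notMem_vars_shE (n : ℕ) : n ∉ (shE : T).vars := by
  show n ∉ ⋃ i : Fin 0, _
  simp

theorem notMem_vars_rightCombE (m n : ℕ) : n ∉ (rightCombE m : T).vars := by
  induction m with
  | zero => exact notMem_vars_shE n
  | succ m ih => simpa [rightCombE, mem_vars_fE, notMem_vars_shE] using ih

theorem mem_vars_leftCombE {k n : ℕ} : n ∈ (leftCombE k : T).vars ↔ n < k := by
  induction k with
  | zero => simpa [leftCombE] using notMem_vars_shE n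
  | succ k ih => simp [leftCombE, mem_vars_fE, ih, Tm.vars]; omega

theorem rightCombE_injective : Function.Injective (rightCombE : ℕ → T) := by
  intro m n h
  induction m generalizing n with
  | zero => cases n with
    | zero => rfl
    | succ n => exact absurd h (shE_ne_fE _ _)
  | succ m ih => cases n with
    | zero => exact absurd h.symm (shE_ne_fE _ _)
    | succ n => rw [ih (fE_inj.1 h).2]

theorem subst_leftCombE_finSubst_inj {k : ℕ} {v w : Fin k → T} :
    (leftCombE k).subst (Tm.finSubst v) = (leftCombE k).subst (Tm.finSubst w) ↔ v = w := by
  simp only [Tm.subst_eq_subst_iff, mem_vars_leftCombE, funext_iff]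
  exact ⟨fun h i => by simpa using h i i.2,
    fun h n hn => by simpa [Tm.finSubst, hn] using h ⟨n, hn⟩⟩

theorem Step.app_inl {g : γ} {ts us : Fin (arγ g) → T} (i : Fin (arγ g))
    (h : Step Q (ts i) (us i)) (hts : ∀ j ≠ i, ts j = us j) :
    Step Q (.app (.inl g) ts) (.app (.inl g) us) :=
  Step.app (ar := arExt arγ) i h hts

theorem Step.fE_left {a a' : T} (b : T) (h : Step Q a a') : Step Q (fE a b) (fE a' b) :=
  Step.app (ar := arExt arγ) (f := Sum.inr true) (ts := ![a, b]) (us := ![a', b]) (0 : Fin 2) h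
    (by intro j hj; fin_cases j; exacts [absurd rfl hj, rfl])

theorem Step.fE_right (a : T) {b b' : T} (h : Step Q b b') : Step Q (fE a b) (fE a b') :=
  Step.app (ar := arExt arγ) (f := Sum.inr true) (ts := ![a, b]) (us := ![a, b']) (1 : Fin 2) h
    (by intro j hj; fin_cases j; exacts [rfl, absurd rfl hj])

theorem Step.subst_leftCombE {k n : ℕ} (hn : n < k) {θ : ℕ → T} {u : T} (h : Step Q (θ n) u) :
    Step Q ((leftCombE k).subst θ) ((leftCombE k).subst (Function.update θ n u)) := by
  induction k with
  | zero => omega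
  | succ k ih =>
    rw [subst_leftCombE_succ, subst_leftCombE_succ]
    rcases (Nat.lt_succ_iff_lt_or_eq.1 hn) with hn | rfl
    · rw [Function.update_of_ne hn.ne']
      exact (ih hn).fE_left _
    · have hL : (leftCombE n : T).subst (Function.update θ n u) = (leftCombE n).subst θ :=
        Tm.subst_eq_subst_iff.2 fun m hm =>
          Function.update_of_ne (mem_vars_leftCombE.1 hm).ne _ _
      rw [hL, Function.update_self]
      exact h.fE_right _

end Combs

section CombTRS

variable {γ : Type} {arγ : γ → ℕ}

local notation "T" => Tm (γ ⊕ Bool) (arExt arγ)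

def combRhs (num : γ → ℕ) (g : γ) : T := fE (leftCombE (arγ g)) (rightCombE (num g))

theorem mem_combTRS {P : γ → Prop} {num : γ → ℕ} {l r : T} :
    (l, r) ∈ combTRS P num ↔
      ∃ g, ¬ P g ∧ l = .app (.inl g) (fun i => .var (i : Fin (arγ g))) ∧ r = combRhs num g := by
  simp [combTRS, combRhs]

def NoInl : T → Prop
  | .var _ => True
  | .app (.inl _) _ => False
  | .app (.inr _) ts => ∀ i, NoInl (ts i)

theorem noInl_shE : NoInl (shE : T) := fun i => i.elim0

theorem noInl_fE {a b : T} (ha : NoInl a) (hb : NoInl b) : NoInl (fE a b) :=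
  Fin.forall_fin_two.2 ⟨ha, hb⟩

theorem noInl_rightCombE (n : ℕ) : NoInl (rightCombE n : T) := by
  induction n with
  | zero => exact noInl_shE
  | succ n ih => exact noInl_fE noInl_shE ih

theorem noInl_leftCombE (k : ℕ) : NoInl (leftCombE k : T) := by
  induction k with
  | zero => exact noInl_shE
  | succ k ih => exact noInl_fE ih trivial

theorem noInl_combRhs (num : γ → ℕ) (g : γ) : NoInl (combRhs num g : T) :=
  noInl_fE (noInl_leftCombE _) (noInl_rightCombE _)

theorem mem_vars_combRhs {num : γ → ℕ} {g : γ} {n : ℕ} :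
    n ∈ (combRhs num g : T).vars ↔ n < arγ g := by
  simp [combRhs, mem_vars_fE, mem_vars_leftCombE, notMem_vars_rightCombE]

theorem step_combTRS_app {P : γ → Prop} (num : γ → ℕ) {g : γ} (hg : ¬ P g)
    (v : Fin (arγ g) → T) :
    Step (combTRS P num) (.app (.inl g) v) ((combRhs num g).subst (Tm.finSubst v)) := by
  convert Step.rule (Tm.finSubst v) (mem_combTRS.2 ⟨g, hg, rfl, rfl⟩)
  exact congrArg (Tm.app _) (funext fun i => (Tm.finSubst_val v i).symm)

theorem isTRS_combTRS [Finite γ] (P : γ → Prop) (num : γ → ℕ) :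
    IsTRS (combTRS (arγ := arγ) P num) := by
  refine ⟨?_, fun ⟨l, r⟩ hlr n hn => ?_⟩
  · have : combTRS (arγ := arγ) P num =
        (fun g => (.app (.inl g) (fun i => .var (i : Fin (arγ g))), combRhs num g)) ''
          {g | ¬ P g} := by
      ext ⟨l, r⟩
      simp [mem_combTRS, eq_comm]
    rw [this]
    exact (Set.toFinite _).image _
  · obtain ⟨g, -, rfl, rfl⟩ := mem_combTRS.1 hlr
    exact Tm.mem_vars_app.2 ⟨⟨n, (mem_vars_combRhs (num := num) (g := g)).1 hn⟩, rfl⟩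

variable (P : γ → Prop)

def AllKept : T → Prop
  | .var _ => True
  | .app (.inl g) ts => P g ∧ ∀ i, AllKept (ts i)
  | .app (.inr _) ts => ∀ i, AllKept (ts i)

variable [DecidablePred P] (num : γ → ℕ)

def combNF : T → T
  | .var n => .var n
  | .app (.inl g) ts =>
    if P g then .app (.inl g) fun i => combNF (ts i)
    else (combRhs num g).subst (Tm.finSubst fun i : Fin (arγ g) => combNF (ts i))
  | .app (.inr b) ts => .app (.inr b) fun i => combNF (ts i)

theorem combNF_subst_of_noInl {t : T} (ht : NoInl t) (θ : ℕ → T) :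
    combNF P num (t.subst θ) = t.subst fun n => combNF P num (θ n) := by
  induction t with
  | var n => rfl
  | app f ts ih =>
    cases f with
    | inl g => exact absurd ht id
    | inr b => exact congrArg (Tm.app (.inr b)) (funext fun i => ih i (ht i))

theorem Step.combNF_eq {t u : T} (h : Step (combTRS P num) t u) :
    combNF P num t = combNF P num u := by
  induction h with
  | @rule l r θ hlr =>
    obtain ⟨g, hg, rfl, rfl⟩ := mem_combTRS.1 hlr
    simp only [Tm.subst, combNF, if_neg hg, combNF_subst_of_noInl P num (noInl_combRhs num g)]
    refine Tm.subst_eq_subst_iff.2 fun n hn => ?_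
    simp [Tm.finSubst, mem_vars_combRhs.1 hn]
  | @congr f ts t' i _ ih =>
    have hupdate : ∀ j, combNF P num (Function.update ts i t' j) = combNF P num (ts j) := by
      intro j
      by_cases hj : j = i
      · subst hj; simp [ih]
      · simp [hj]
    cases f with
    | inl g =>
      have hupdate' : ∀ j : Fin (arγ g), combNF P num (Function.update ts i t' j) =
          combNF P num (ts j) := hupdate
      simp only [combNF, hupdate, hupdate']
    | inr b => simp only [combNF, hupdate]

theorem Steps.combNF_eq {t u : T} (h : Steps (combTRS P num) t u) :
    combNF P num t = combNF P num u := by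
  induction h with
  | refl => rfl
  | tail _ hstep ih => exact ih.trans (hstep.combNF_eq P num)

theorem steps_combNF (t : T) : Steps (combTRS P num) t (combNF P num t) := by
  induction t with
  | var n => exact .refl
  | app f ts ih =>
    have hargs : Steps (combTRS P num) (.app f ts) (.app f fun i => combNF P num (ts i)) :=
      Steps.app ih
    cases f with
    | inl g =>
      by_cases hg : P g
      · simpa [combNF, hg] using hargs
      · simp only [combNF, if_neg hg]
        exact hargs.tail (step_combTRS_app num hg fun i : Fin (arγ g) => combNF P num (ts i))
    | inr b => exact hargs

theorem confluent_combTRS : Confluent (combTRS (arγ := arγ) P num) := fun a b c hab hac =>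
  ⟨combNF P num a, hab.combNF_eq P num ▸ steps_combNF P num b,
    hac.combNF_eq P num ▸ steps_combNF P num c⟩

theorem combNF_of_allKept {t : T} (ht : AllKept P t) : combNF P num t = t := by
  induction t with
  | var n => rfl
  | app f ts ih =>
    cases f with
    | inl g => simpa [combNF, ht.1] using funext fun i => ih i (ht.2 i)
    | inr b => simpa [combNF] using funext fun i => ih i (ht i)

theorem exists_step_of_not_allKept {t : T} (ht : ¬ AllKept P t) :
    ∃ u, Step (combTRS P num) t u := by
  induction t with
  | var n => exact absurd trivial ht
  | app f ts ih =>
    have of_arg : (¬ ∀ i, AllKept P (ts i)) → ∃ u, Step (combTRS P num) (.app f ts) u := by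
      intro hts
      obtain ⟨i, hi⟩ := not_forall.1 hts
      obtain ⟨u, hu⟩ := ih i hi
      exact ⟨_, Step.congr i hu⟩
    cases f with
    | inl g =>
      by_cases hg : P g
      · exact of_arg fun hts => ht ⟨hg, hts⟩
      · exact ⟨_, step_combTRS_app num hg ts⟩
    | inr b => exact of_arg ht

theorem NormalFormOf.eq_combNF {t u : T} (h : NormalFormOf (combTRS P num) t u) :
    u = combNF P num t := by
  have hu : AllKept P u := by_contra fun hu => h.2 (exists_step_of_not_allKept P num hu)
  rw [h.1.combNF_eq, combNF_of_allKept P num hu]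

end CombTRS

section Termination

variable {γ : Type} {arγ : γ → ℕ} (P : γ → Prop) [DecidablePred P]

local notation "T" => Tm (γ ⊕ Bool) (arExt arγ)

def unkeptCount : T → ℕ
  | .var _ => 0
  | .app (.inl g) ts => (if P g then 0 else 1) + ∑ i, unkeptCount (ts i)
  | .app (.inr _) ts => ∑ i, unkeptCount (ts i)

theorem unkeptCount_fE (a b : T) : unkeptCount P (fE a b) = unkeptCount P a + unkeptCount P b :=
  Fin.sum_univ_two _

theorem unkeptCount_rightCombE (n : ℕ) : unkeptCount P (rightCombE n : T) = 0 := by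
  induction n with
  | zero => rfl
  | succ n ih => rw [rightCombE, unkeptCount_fE, ih]; rfl

theorem unkeptCount_subst_leftCombE (θ : ℕ → T) (k : ℕ) :
    unkeptCount P ((leftCombE k).subst θ) = ∑ i ∈ Finset.range k, unkeptCount P (θ i) := by
  induction k with
  | zero => rfl
  | succ k ih => rw [subst_leftCombE_succ, unkeptCount_fE, ih, Finset.sum_range_succ]

theorem sum_update_lt {α : Type*} {n : ℕ} (c : α → ℕ) {ts : Fin n → α} {i : Fin n} {t' : α}
    (h : c t' < c (ts i)) : ∑ j, c (Function.update ts i t' j) < ∑ j, c (ts j) := by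
  refine Finset.sum_lt_sum (fun j _ => ?_) ⟨i, Finset.mem_univ i, by simpa using h⟩
  by_cases hj : j = i
  · subst hj; simpa using h.le
  · simp [hj]

theorem Step.unkeptCount_lt (num : γ → ℕ) {t u : T} (h : Step (combTRS P num) t u) :
    unkeptCount P u < unkeptCount P t := by
  induction h with
  | @rule l r θ hlr =>
    obtain ⟨g, hg, rfl, rfl⟩ := mem_combTRS.1 hlr
    have hrhs : unkeptCount P ((combRhs num g).subst θ) =
        ∑ i ∈ Finset.range (arγ g), unkeptCount P (θ i) := by
      rw [combRhs, subst_fE, unkeptCount_fE, subst_rightCombE, unkeptCount_rightCombE,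
        unkeptCount_subst_leftCombE, add_zero]
    have hlhs : unkeptCount P ((Tm.app (.inl g) fun i => .var (i : Fin (arγ g))).subst θ) =
        1 + ∑ i : Fin (arγ g), unkeptCount P (θ i) := by
      simp [Tm.subst, unkeptCount, hg]
      rfl
    rw [hrhs, hlhs, Fin.sum_univ_eq_sum_range (fun i => unkeptCount P (θ i))]
    omega
  | @congr f ts t' i _ ih =>
    cases f with
    | inl g => exact Nat.add_lt_add_left (sum_update_lt (unkeptCount P) ih) _
    | inr b => exact sum_update_lt (unkeptCount P) ih

theorem terminating_combTRS (num : γ → ℕ) : Terminating (combTRS (arγ := arγ) P num) :=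
  fun ⟨f, hf⟩ => not_strictAnti_of_wellFoundedLT (fun n => unkeptCount P (f n))
    (strictAnti_nat_of_succ_lt fun n => (hf n).unkeptCount_lt P num)

end Termination

section Encoding

variable {σ γ : Type} {ar : σ → ℕ} {arγ : γ → ℕ} (P : γ → Prop) [DecidablePred P] (num : γ → ℕ)

local notation "T" => Tm (γ ⊕ Bool) (arExt arγ)

def encode (r : Tm γ arγ) : T := combNF P num (r.map Sum.inl fun _ => rfl)

theorem encode_var (n : ℕ) : encode P num (.var n : Tm γ arγ) = .var n := rfl

theorem encode_app_pos {g : γ} (hg : P g) (ts : Fin (arγ g) → Tm γ arγ) :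
    encode P num (.app g ts) = .app (.inl g) fun i => encode P num (ts i) := by
  simp [encode, Tm.map, combNF, hg]

theorem encode_app_neg {g : γ} (hg : ¬ P g) (ts : Fin (arγ g) → Tm γ arγ) :
    encode P num (.app g ts) =
      fE ((leftCombE (arγ g)).subst (Tm.finSubst fun i => encode P num (ts i)))
        (rightCombE (num g)) := by
  simp [encode, Tm.map, combNF, hg, combRhs, subst_fE, subst_rightCombE]

variable {P num}

theorem encode_eq_app_inl {s : Tm γ arγ} {g : γ} {vs : Fin (arγ g) → T}
    (h : encode P num s = .app (.inl g) vs) :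
    ∃ us, s = .app g us ∧ ∀ i, vs i = encode P num (us i) := by
  cases s with
  | var n => cases h
  | app g' us =>
    by_cases hg' : P g'
    · rw [encode_app_pos P num hg'] at h
      injection h with hg hus
      cases hg
      exact ⟨us, rfl, fun i => (congrFun (eq_of_heq hus) i).symm⟩
    · rw [encode_app_neg P num hg'] at h
      cases h

theorem encode_eq_app_inr {s : Tm γ arγ} {b : Bool} {vs : Fin (arExt arγ (.inr b)) → T}
    (h : encode P num s = .app (.inr b) vs) : ∃ g us, ¬ P g ∧ s = .app g us := by
  cases s with
  | var n => cases h
  | app g us =>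
    by_cases hg : P g
    · rw [encode_app_pos P num hg] at h
      cases h
    · exact ⟨g, us, hg, rfl⟩

theorem encode_injective (hnum : Set.InjOn num {g | ¬ P g}) :
    Function.Injective (encode (arγ := arγ) P num) := by
  intro t u h
  induction t generalizing u with
  | var n =>
    cases u with
    | var m => cases h; rfl
    | app g us =>
      by_cases hg : P g <;> simp [encode_var, encode_app_pos, encode_app_neg, hg, fE] at h
  | app g ts ih =>
    by_cases hg : P g
    · rw [encode_app_pos P num hg] at h
      obtain ⟨us, rfl, hus⟩ := encode_eq_app_inl h.symm
      exact congrArg _ (funext fun i => ih i (hus i))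
    · rw [encode_app_neg P num hg] at h
      obtain ⟨g', us, hg', rfl⟩ := encode_eq_app_inr h.symm
      rw [encode_app_neg P num hg', fE_inj] at h
      obtain rfl : g = g' := hnum hg hg' (rightCombE_injective h.2)
      have hargs := subst_leftCombE_finSubst_inj.1 h.1
      exact congrArg _ (funext fun i => ih i (congrFun hargs i))

end Encoding

section EncodingSteps

variable {σ γ : Type} {ar : σ → ℕ} {arγ : γ → ℕ} {P : γ → Prop} [DecidablePred P] {num : γ → ℕ}
  {ι : σ → γ} {har : ∀ c, arγ (ι c) = ar c} {R : Set (Tm σ ar × Tm σ ar)}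

local notation "T" => Tm (γ ⊕ Bool) (arExt arγ)

theorem encode_subst_map (hP : ∀ c, P (ι c)) (l : Tm σ ar) (θ : ℕ → Tm γ arγ) :
    encode P num ((l.map ι har).subst θ) =
      (l.map (Sum.inl ∘ ι) fun c => har c).subst fun n => encode P num (θ n) := by
  induction l with
  | var n => rfl
  | app c ls ih =>
    simp only [Tm.map, Tm.subst, encode_app_pos P num (hP c)]
    exact congrArg _ (funext fun i => ih _)

theorem step_encode_of_step (hP : ∀ c, P (ι c)) {r s : Tm γ arγ}
    (h : Step (mapRules ι har R) r s) :
    Step (mapRules (Sum.inl ∘ ι) (fun c => har c) R) (encode P num r) (encode P num s) := by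
  induction h with
  | @rule l ρ θ hlr =>
    obtain ⟨⟨l, ρ⟩, hlρ, rfl, rfl⟩ := mem_mapRules.1 hlr
    rw [encode_subst_map hP, encode_subst_map hP]
    exact .rule _ (mem_mapRules.2 ⟨_, hlρ, rfl, rfl⟩)
  | @congr g ts t' i _ ih =>
    by_cases hg : P g
    · rw [encode_app_pos P num hg, encode_app_pos P num hg]
      exact Step.app_inl i (by rwa [Function.update_self]) fun j hj => by
        rw [Function.update_of_ne hj]
    · rw [encode_app_neg P num hg, encode_app_neg P num hg]
      have hargs : (Tm.finSubst fun j => encode P num (Function.update ts i t' j)) =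
          Function.update (Tm.finSubst fun j => encode P num (ts j)) i (encode P num t') := by
        rw [← Tm.finSubst_update]
        congr 1
        funext j
        by_cases hj : j = i
        · subst hj; simp
        · simp [hj]
      rw [hargs]
      exact (Step.subst_leftCombE i.2 (by simpa using ih)).fE_left _

theorem exists_subst_of_encode_eq (hnum : Set.InjOn num {g | ¬ P g})
    {l : Tm σ ar} {r : Tm γ arγ} {θ' : ℕ → T}
    (h : encode P num r = (l.map (Sum.inl ∘ ι) fun c => har c).subst θ') :
    ∃ θ, r = (l.map ι har).subst θ ∧ ∀ n ∈ l.vars, θ' n = encode P num (θ n) := by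
  -- Reading the instance off through a left inverse of `encode` makes it agree on repeated
  -- variables of `l`.
  have hinv := Function.leftInverse_invFun (encode_injective (arγ := arγ) hnum)
  refine ⟨fun n => Function.invFun (encode P num) (θ' n), ?_⟩
  induction l generalizing r with
  | var p =>
    change encode P num r = θ' p at h
    refine ⟨by simp [Tm.map, Tm.subst, ← h, hinv r], fun n hn => ?_⟩
    simp [show n = p from hn, ← h, hinv r]
  | app c ls ih =>
    obtain ⟨us, rfl, hus⟩ := encode_eq_app_inl h
    refine ⟨congrArg _ (funext fun i => (ih _ (hus i).symm).1), fun n hn => ?_⟩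
    obtain ⟨j, hj⟩ := Tm.mem_vars_app.1 hn
    exact (ih j (hus (Fin.cast (har c).symm j)).symm).2 n hj

end EncodingSteps

section MappedSteps

variable {σ γ : Type} {ar : σ → ℕ} {arγ : γ → ℕ} {ι : σ → γ} {har : ∀ c, arγ (ι c) = ar c}
  {R : Set (Tm σ ar × Tm σ ar)}

local notation "T" => Tm (γ ⊕ Bool) (arExt arγ)

theorem exists_var_rule_of_subst_not_inl (hvars : ∀ lr ∈ R, lr.2.vars ⊆ lr.1.vars) {l ρ : T}
    (hlρ : (l, ρ) ∈ mapRules (Sum.inl ∘ ι) (fun c => har c) R) {θ : ℕ → T}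
    (hl : ∀ g vs, l.subst θ ≠ .app (.inl g) vs) (hρ : ∀ g vs, ρ.subst θ ≠ .app (.inl g) vs) :
    l.subst θ = ρ.subst θ ∧ ∃ p, (.var p, .var p) ∈ R := by
  obtain ⟨⟨l, ρ⟩, hmem, rfl, rfl⟩ := mem_mapRules.1 hlρ
  cases l with
  | app c _ => exact absurd rfl (hl (ι c) _)
  | var p =>
    cases ρ with
    | app c _ => exact absurd rfl (hρ (ι c) _)
    | var q =>
      obtain rfl : q = p := hvars _ hmem (Set.mem_singleton q)
      exact ⟨rfl, _, hmem⟩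

theorem NoInl.ne_app_inl {t : T} (ht : NoInl t) (g : γ) (vs : Fin (arγ g) → T) :
    t ≠ .app (.inl g) vs := by
  rintro rfl
  exact ht

theorem Step.eq_of_noInl (hvars : ∀ lr ∈ R, lr.2.vars ⊆ lr.1.vars) {t u : T}
    (h : Step (mapRules (Sum.inl ∘ ι) (fun c => har c) R) t u) (ht : NoInl t) (hu : NoInl u) :
    t = u ∧ ∃ p, (.var p, .var p) ∈ R := by
  induction h with
  | rule θ hlρ => exact exists_var_rule_of_subst_not_inl hvars hlρ ht.ne_app_inl hu.ne_app_inl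
  | @congr f ts t' i _ ih =>
    cases f with
    | inl g => exact absurd ht id
    | inr b =>
      obtain ⟨hts, hp⟩ := ih (ht i) (by simpa using hu i)
      exact ⟨by rw [← hts, Function.update_eq_self], hp⟩

theorem Step.fE_inv (hvars : ∀ lr ∈ R, lr.2.vars ⊆ lr.1.vars) {a a' b b' : T}
    (h : Step (mapRules (Sum.inl ∘ ι) (fun c => har c) R) (fE a b) (fE a' b')) :
    (Step (mapRules (Sum.inl ∘ ι) (fun c => har c) R) a a' ∧ b = b') ∨
      (a = a' ∧ Step (mapRules (Sum.inl ∘ ι) (fun c => har c) R) b b') := by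
  rcases Step.app_inv h with ⟨l, ρ, θ, hlρ, hl, hρ⟩ | ⟨i, t', hi, hu⟩
  · -- a rule applies at an `f`-node only if it is `x → x`, and then either argument steps to itself
    obtain ⟨heq, p, hp⟩ := exists_var_rule_of_subst_not_inl hvars hlρ
      (fun g vs h => by rw [← hl] at h; cases h) (fun g vs h => by rw [← hρ] at h; cases h)
    obtain ⟨rfl, rfl⟩ := fE_inj.1 (hl.trans (heq.trans hρ.symm))
    exact .inl ⟨step_self_of_var_rule hp a, rfl⟩
  · revert i t'
    change ∀ (i : Fin 2) (t' : T), _ → fE a' b' =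
      Tm.app (Sum.inr true) (Function.update (![a, b] : Fin 2 → T) i t') → _
    intro i t' hi hu
    injection hu with _ hu
    have h0 := congrFun hu 0
    have h1 := congrFun hu 1
    fin_cases i
    · simp at h0 h1
      exact .inl ⟨h0 ▸ hi, h1.symm⟩
    · simp at h0 h1
      exact .inr ⟨h0.symm, h1 ▸ hi⟩

theorem Step.subst_leftCombE_inv (hvars : ∀ lr ∈ R, lr.2.vars ⊆ lr.1.vars) {k : ℕ}
    {θ θ' : ℕ → T}
    (h : Step (mapRules (Sum.inl ∘ ι) (fun c => har c) R)
      ((leftCombE k).subst θ) ((leftCombE k).subst θ')) :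
    (∃ n < k, Step (mapRules (Sum.inl ∘ ι) (fun c => har c) R) (θ n) (θ' n) ∧
        ∀ m < k, m ≠ n → θ m = θ' m) ∨
      ((∀ m < k, θ m = θ' m) ∧ ∃ p, (.var p, .var p) ∈ R) := by
  induction k with
  | zero =>
    rw [leftCombE, subst_shE, subst_shE] at h
    exact .inr ⟨by simp, (h.eq_of_noInl hvars noInl_shE noInl_shE).2⟩
  | succ k ih =>
    rw [subst_leftCombE_succ, subst_leftCombE_succ] at h
    rcases h.fE_inv hvars with ⟨hL, hk⟩ | ⟨hL, hk⟩
    · rcases ih hL with ⟨n, hn, hstep, heq⟩ | ⟨heq, hp⟩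
      · refine .inl ⟨n, by omega, hstep, fun m hm hmn => ?_⟩
        rcases Nat.lt_succ_iff_lt_or_eq.1 hm with hm | rfl
        exacts [heq m hm hmn, hk]
      · refine .inr ⟨fun m hm => ?_, hp⟩
        rcases Nat.lt_succ_iff_lt_or_eq.1 hm with hm | rfl
        exacts [heq m hm, hk]
    · refine .inl ⟨k, k.lt_succ_self, hk, fun m hm hmk => ?_⟩
      exact Tm.subst_eq_subst_iff.1 hL m (mem_vars_leftCombE.2 (by omega))

end MappedSteps

section Decoding

variable {σ γ : Type} {ar : σ → ℕ} {arγ : γ → ℕ} {P : γ → Prop} [DecidablePred P] {num : γ → ℕ}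
  {ι : σ → γ} {har : ∀ c, arγ (ι c) = ar c} {R : Set (Tm σ ar × Tm σ ar)}

local notation "T" => Tm (γ ⊕ Bool) (arExt arγ)

theorem step_of_encode_eq_subst (hvars : ∀ lr ∈ R, lr.2.vars ⊆ lr.1.vars)
    (hnum : Set.InjOn num {g | ¬ P g}) (hP : ∀ c, P (ι c)) {l ρ : T}
    (hlρ : (l, ρ) ∈ mapRules (Sum.inl ∘ ι) (fun c => har c) R) {θ' : ℕ → T} {r s : Tm γ arγ}
    (hr : encode P num r = l.subst θ') (hs : encode P num s = ρ.subst θ') :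
    Step (mapRules ι har R) r s := by
  obtain ⟨⟨l, ρ⟩, hmem, rfl, rfl⟩ := mem_mapRules.1 hlρ
  obtain ⟨θ, rfl, hθ⟩ := exists_subst_of_encode_eq hnum hr
  obtain rfl : s = (ρ.map ι har).subst θ := by
    refine encode_injective hnum ?_
    rw [hs, encode_subst_map hP, Tm.subst_eq_subst_iff]
    exact fun n hn => hθ n (hvars _ hmem ((Tm.mem_vars_map _ _ _).1 hn))
  exact .rule θ (mem_mapRules.2 ⟨_, hmem, rfl, rfl⟩)

theorem step_app_of_step_encode_neg (hvars : ∀ lr ∈ R, lr.2.vars ⊆ lr.1.vars)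
    (hnum : Set.InjOn num {g | ¬ P g}) {g g' : γ} (hg : ¬ P g) (hg' : ¬ P g')
    {rs : Fin (arγ g) → Tm γ arγ} {us : Fin (arγ g') → Tm γ arγ}
    (ih : ∀ i s, Step (mapRules (Sum.inl ∘ ι) (fun c => har c) R)
      (encode P num (rs i)) (encode P num s) → Step (mapRules ι har R) (rs i) s)
    (h : Step (mapRules (Sum.inl ∘ ι) (fun c => har c) R)
      (encode P num (.app g rs)) (encode P num (.app g' us))) :
    Step (mapRules ι har R) (.app g rs) (.app g' us) := by
  rw [encode_app_neg P num hg, encode_app_neg P num hg'] at h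
  rcases h.fE_inv hvars with ⟨hL, hrc⟩ | ⟨hL, hrc⟩
  · obtain rfl : g = g' := hnum hg hg' (rightCombE_injective hrc)
    rcases hL.subst_leftCombE_inv hvars with ⟨n, hn, hstep, heq⟩ | ⟨heq, p, hp⟩
    · simp only [Tm.finSubst, hn, dite_true] at hstep
      refine Step.app ⟨n, hn⟩ (ih _ _ hstep) fun j hj => encode_injective hnum ?_
      simpa [Tm.finSubst] using heq j j.2 (Fin.val_ne_of_ne hj)
    · obtain rfl : rs = us :=
        funext fun j => encode_injective hnum (by simpa [Tm.finSubst] using heq j j.2)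
      exact step_self_of_var_rule hp _
  · obtain ⟨hrc, p, hp⟩ := hrc.eq_of_noInl hvars (noInl_rightCombE _) (noInl_rightCombE _)
    obtain rfl : g = g' := hnum hg hg' (rightCombE_injective hrc)
    obtain rfl : rs = us := funext fun j =>
      encode_injective hnum (congrFun (subst_leftCombE_finSubst_inj.1 hL) j)
    exact step_self_of_var_rule hp _

theorem step_of_step_encode (hvars : ∀ lr ∈ R, lr.2.vars ⊆ lr.1.vars)
    (hnum : Set.InjOn num {g | ¬ P g}) (hP : ∀ c, P (ι c)) {r s : Tm γ arγ}
    (h : Step (mapRules (Sum.inl ∘ ι) (fun c => har c) R) (encode P num r) (encode P num s)) :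
    Step (mapRules ι har R) r s := by
  induction r generalizing s with
  | var n =>
    obtain ⟨l, ρ, θ, hlρ, hr, hs⟩ := h.var_inv
    exact step_of_encode_eq_subst hvars hnum hP hlρ hr hs
  | app g rs ih =>
    by_cases hg : P g
    · rw [encode_app_pos P num hg] at h
      rcases Step.app_inv h with ⟨l, ρ, θ, hlρ, hr, hs⟩ | ⟨i, t', hi, hs⟩
      · exact step_of_encode_eq_subst hvars hnum hP hlρ ((encode_app_pos P num hg rs).trans hr) hs
      · obtain ⟨us, rfl, hus⟩ := encode_eq_app_inl hs
        refine Step.app i (ih i (by rwa [← hus i, Function.update_self])) fun j hj => ?_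
        exact encode_injective hnum ((Function.update_of_ne hj _ _).symm.trans (hus j))
    · have h' := h
      rw [encode_app_neg P num hg] at h'
      rcases Step.app_inv h' with ⟨l, ρ, θ, hlρ, hr, hs⟩ | ⟨i, t', -, hs⟩
      · exact step_of_encode_eq_subst hvars hnum hP hlρ ((encode_app_neg P num hg rs).trans hr) hs
      · obtain ⟨g', us, hg', rfl⟩ := encode_eq_app_inr hs
        exact step_app_of_step_encode_neg hvars hnum hg hg' (fun i s => ih i) h

end Decoding

theorem stmt_9_general {σ γ : Type} {ar : σ → ℕ} {arγ : γ → ℕ} [Finite γ]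
    (R : Set (Tm σ ar × Tm σ ar)) (hR : IsTRS R)
    -- `Γ` is a ranked alphabet with `sign(R) ⊆ Γ`
    (ι : σ → γ) (har : ∀ s, arγ (ι s) = ar s)
    -- a numbering of the symbols of `Γ − sign(R)` from `1` to `|Γ − sign(R)|`
    (num : γ → ℕ)
    (hnum : Set.BijOn num {g : γ | g ∉ Set.range ι}
      (Set.Icc 1 (Nat.card {g : γ // g ∉ Set.range ι}))) :
    -- `S` is a convergent TRS, and …
    IsTRS (combTRS (arγ := arγ) (· ∈ Set.range ι) num) ∧
    Terminating (combTRS (arγ := arγ) (· ∈ Set.range ι) num) ∧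
    Confluent (combTRS (arγ := arγ) (· ∈ Set.range ι) num) ∧
    -- … for all `r, s ∈ T_Γ`: `r →_R s ↔ r↓_S →_R s↓_S`
    (∀ r s : Tm γ arγ, r.Ground → s.Ground →
      ∀ r' s' : Tm (γ ⊕ Bool) (arExt arγ),
        NormalFormOf (combTRS (arγ := arγ) (· ∈ Set.range ι) num)
          (r.map Sum.inl fun _ => rfl) r' →
        NormalFormOf (combTRS (arγ := arγ) (· ∈ Set.range ι) num)
          (s.map Sum.inl fun _ => rfl) s' →
        (Step (mapRules ι har R) r s ↔
          Step (mapRules (Sum.inl ∘ ι) (fun t => har t) R) r' s')) := by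
  classical
  have hP : ∀ c, ι c ∈ Set.range ι := fun c => ⟨c, rfl⟩
  refine ⟨isTRS_combTRS _ num, terminating_combTRS _ num, confluent_combTRS _ num, ?_⟩
  intro r s _ _ r' s' hr' hs'
  rw [hr'.eq_combNF, hs'.eq_combNF]
  exact ⟨step_encode_of_step hP, step_of_step_encode hR.2 hnum.injOn hP⟩

theorem stmt_9 {σ γ : Type} {ar : σ → ℕ} {arγ : γ → ℕ} [Finite σ] [Finite γ]
    (R : Set (Tm σ ar × Tm σ ar)) (hR : IsTRS R)
    -- `R` is a TRS over `sign(R)`: every symbol of `σ` occurs in `R`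
    (hsign : ∀ s : σ, ∃ lr ∈ R, lr.1.symOccurs s ∨ lr.2.symOccurs s)
    -- `Γ` is a ranked alphabet with `sign(R) ⊆ Γ`
    (ι : σ → γ) (hinj : Function.Injective ι) (har : ∀ s, arγ (ι s) = ar s)
    -- a numbering of the symbols of `Γ − sign(R)` from `1` to `|Γ − sign(R)|`
    (num : γ → ℕ)
    (hnum : Set.BijOn num {g : γ | g ∉ Set.range ι}
      (Set.Icc 1 (Nat.card {g : γ // g ∉ Set.range ι}))) :
    -- `S` is a convergent TRS, and …
    IsTRS (combTRS (arγ := arγ) (· ∈ Set.range ι) num) ∧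
    Terminating (combTRS (arγ := arγ) (· ∈ Set.range ι) num) ∧
    Confluent (combTRS (arγ := arγ) (· ∈ Set.range ι) num) ∧
    -- … for all `r, s ∈ T_Γ`: `r →_R s ↔ r↓_S →_R s↓_S`
    (∀ r s : Tm γ arγ, r.Ground → s.Ground →
      ∀ r' s' : Tm (γ ⊕ Bool) (arExt arγ),
        NormalFormOf (combTRS (arγ := arγ) (· ∈ Set.range ι) num)
          (r.map Sum.inl fun _ => rfl) r' →
        NormalFormOf (combTRS (arγ := arγ) (· ∈ Set.range ι) num)
          (s.map Sum.inl fun _ => rfl) s' →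
        (Step (mapRules ι har R) r s ↔
          Step (mapRules (Sum.inl ∘ ι) (fun t => har t) R) r' s')) :=
  stmt_9_general R hR ι har num hnum
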